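/- Probabilistic completeness of layered sampling: Let C ⊆ ℝ^d be a bounded measurable configuration space with μ(C) > 0, and suppose there exists a piecewise linear feasible path g from q_0 to the goal with M+1 equal segments and collision margin r > 0 (every point within distance r of the image of g is collision-free). Sample a layered graph G by drawing N points i.i.d. uniformly from C for each of the M middle layers, connecting all consecutive layers completely, with fixed endpoints q_0 and the goal. Then the probability that G contains a collision-free piecewise linear path from q_0 to the goal is at least 1 - M·exp(-(α_d·r^d/μ(C))·N). -/

import Mathlib

open MeasureTheory ProbabilityTheory Set

/-- The `M+2` breakpoints of a layered path: start, one point per middle layer, goal. -/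
def pathPts {E : Type*} {M : ℕ} (q0 goal : E) (Y : Fin M → E) : Fin (M + 2) → E :=
  Fin.cons q0 (Fin.snoc Y goal)

/-!
If every middle layer contains a sample within distance `r` of the corresponding breakpoint of
the feasible path, then joining those samples gives a path whose breakpoints, hence (by convexity
of balls) whose segments, stay within `r` of the feasible path, so it is collision-free.
A single uniform sample lands in a given such ball with probability `q = α_d r^d / μ(C)`, so by
independence a layer misses it with probability `(1 - q)^N ≤ exp (-q N)`; a union bound over the
`M` layers finishes the proof.
-/

lemma dist_add_smul_sub_lt {E : Type*} [SeminormedAddCommGroup E] [NormedSpace ℝ E]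
    {a b a' b' : E} {r s : ℝ} (ha : dist a a' < r) (hb : dist b b' < r)
    (hs : s ∈ Icc (0 : ℝ) 1) :
    dist (a + s • (b - a)) (a' + s • (b' - a')) < r := by
  have hmem := convex_ball (0 : E) r (mem_ball_zero_iff.2 (dist_eq_norm a a' ▸ ha))
    (mem_ball_zero_iff.2 (dist_eq_norm b b' ▸ hb)) (sub_nonneg.2 hs.2) hs.1 (sub_add_cancel 1 s)
  have hdiff : a + s • (b - a) - (a' + s • (b' - a')) = (1 - s) • (a - a') + s • (b - b') := by
    module
  rwa [dist_eq_norm, hdiff, ← mem_ball_zero_iff]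

lemma dist_pathPts_lt {E : Type*} [PseudoMetricSpace E] {M : ℕ} {q0 goal : E}
    {p : Fin (M + 2) → E} {Y : Fin M → E} {r : ℝ} (hp0 : p 0 = q0)
    (hpl : p (Fin.last (M + 1)) = goal) (hr : 0 < r)
    (hY : ∀ i, dist (Y i) (p i.castSucc.succ) < r) (k : Fin (M + 2)) :
    dist (pathPts q0 goal Y k) (p k) < r := by
  induction k using Fin.cases with
  | zero => simpa [pathPts, hp0] using hr
  | succ k =>
    induction k using Fin.lastCases with
    | last => simpa [pathPts, Fin.succ_last, hpl] using hr
    | cast i => simpa [pathPts] using hY i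

lemma volume_ball_div_eq_ofReal {E : Type*} [NormedAddCommGroup E] [NormedSpace ℝ E]
    [FiniteDimensional ℝ E] [MeasurableSpace E] [BorelSpace E] (μ : Measure E)
    [μ.IsAddHaarMeasure] {C : Set E} (hC0 : μ C ≠ 0) (hC : μ C ≠ ⊤) (c : E) {r : ℝ}
    (hr : 0 < r) :
    μ (Metric.ball c r) / μ C = ENNReal.ofReal
      ((μ (Metric.ball 0 1)).toReal * r ^ Module.finrank ℝ E / (μ C).toReal) := by
  rw [ENNReal.ofReal_div_of_pos (ENNReal.toReal_pos hC0 hC), ENNReal.ofReal_toReal hC,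
    ENNReal.ofReal_mul ENNReal.toReal_nonneg,
    ENNReal.ofReal_toReal measure_ball_lt_top.ne, Measure.addHaar_ball_of_pos μ c hr, mul_comm]

lemma measure_compl_le_exp_neg {Ω : Type*} [MeasurableSpace Ω] {P : Measure Ω}
    [IsProbabilityMeasure P] {S : Set Ω} {q : ℝ} (hS : MeasurableSet S) (hq : 0 ≤ q)
    (hPS : P S = ENNReal.ofReal q) :
    P Sᶜ ≤ ENNReal.ofReal (Real.exp (-q)) := by
  rw [prob_compl_eq_one_sub hS, hPS, ← ENNReal.ofReal_one, ← ENNReal.ofReal_sub 1 hq]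
  exact ENNReal.ofReal_le_ofReal (Real.one_sub_le_exp_neg q)

lemma ProbabilityTheory.iIndepFun.measure_iInter_preimage_compl_le_exp {Ω β κ : Type*}
    [MeasurableSpace Ω] [MeasurableSpace β] [Fintype κ] {P : Measure Ω} [IsProbabilityMeasure P]
    {Y : κ → Ω → β} (hY : iIndepFun Y P) (hmeas : ∀ k, Measurable (Y k)) {B : Set β}
    (hB : MeasurableSet B) {q : ℝ} (hq : 0 ≤ q) (hhit : ∀ k, P (Y k ⁻¹' B) = ENNReal.ofReal q) :
    P (⋂ k, Y k ⁻¹' Bᶜ) ≤ ENNReal.ofReal (Real.exp (-(q * Fintype.card κ))) := by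
  have hprod := hY.measure_inter_preimage_eq_mul Finset.univ (sets := fun _ => Bᶜ)
    fun _ _ => hB.compl
  simp only [Finset.mem_univ, iInter_true] at hprod
  calc P (⋂ k, Y k ⁻¹' Bᶜ) = ∏ k, P (Y k ⁻¹' Bᶜ) := hprod
    _ ≤ ∏ _k : κ, ENNReal.ofReal (Real.exp (-q)) := Finset.prod_le_prod' fun k _ => by
        simpa only [preimage_compl] using
          measure_compl_le_exp_neg (hB.preimage (hmeas k)) hq (hhit k)
    _ = ENNReal.ofReal (Real.exp (-(q * Fintype.card κ))) := by
        rw [Finset.prod_const, Finset.card_univ, ← ENNReal.ofReal_pow (Real.exp_nonneg _),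
          ← Real.exp_nat_mul]
        ring_nf

lemma ofReal_one_sub_card_mul_le_measure_compl_iUnion {Ω ι : Type*} [MeasurableSpace Ω]
    [Fintype ι] {P : Measure Ω} [IsProbabilityMeasure P] {A : ι → Set Ω} {b : ℝ} (hb : 0 ≤ b)
    (hA : ∀ i, P (A i) ≤ ENNReal.ofReal b) :
    ENNReal.ofReal (1 - Fintype.card ι * b) ≤ P (⋃ i, A i)ᶜ := by
  have hunion : P (⋃ i, A i) ≤ ENNReal.ofReal (Fintype.card ι * b) := by
    calc P (⋃ i, A i) ≤ ∑ i, P (A i) := measure_iUnion_fintype_le P A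
      _ ≤ ∑ _i : ι, ENNReal.ofReal b := Finset.sum_le_sum fun i _ => hA i
      _ = ENNReal.ofReal (Fintype.card ι * b) := by
        rw [Finset.sum_const, Finset.card_univ, nsmul_eq_mul,
          ENNReal.ofReal_mul (Nat.cast_nonneg _), ENNReal.ofReal_natCast]
  rw [ENNReal.ofReal_sub 1 (by positivity), ENNReal.ofReal_one, tsub_le_iff_right]
  calc (1 : ENNReal) = P ((⋃ i, A i)ᶜ ∪ ⋃ i, A i) := by rw [compl_union_self, measure_univ]
    _ ≤ P (⋃ i, A i)ᶜ + P (⋃ i, A i) := measure_union_le _ _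
    _ ≤ P (⋃ i, A i)ᶜ + ENNReal.ofReal (Fintype.card ι * b) := add_le_add le_rfl hunion

theorem layered_sampling_probabilistic_completeness_general
    {d : ℕ} (C Ccoll : Set (EuclideanSpace ℝ (Fin d)))
    (hC0 : 0 < (volume C).toReal)
    (M N : ℕ)
    (q0 goal : EuclideanSpace ℝ (Fin d))
    (p : Fin (M + 2) → EuclideanSpace ℝ (Fin d))
    (hp0 : p 0 = q0) (hpl : p (Fin.last (M + 1)) = goal)
    (r : ℝ) (hr : 0 < r)
    (hmargin : ∀ x : EuclideanSpace ℝ (Fin d),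
      (∃ m : Fin (M + 1), ∃ s ∈ Set.Icc (0 : ℝ) 1,
        dist x (p m.castSucc + s • (p m.succ - p m.castSucc)) < r) → x ∈ C \ Ccoll)
    {Ω : Type*} [MeasurableSpace Ω] (P : Measure Ω) [IsProbabilityMeasure P]
    (X : Fin M × Fin N → Ω → EuclideanSpace ℝ (Fin d))
    (hmeas : ∀ k, Measurable (X k))
    (hdist : ∀ k, Measure.map (X k) P = (volume C)⁻¹ • volume.restrict C)
    (hindep : iIndepFun X P) :
    ENNReal.ofReal
        (1 - (M : ℝ) * Real.exp
          (-(((volume (Metric.ball (0 : EuclideanSpace ℝ (Fin d)) 1)).toReal *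
            r ^ d / (volume C).toReal) * N))) ≤
      P {ω | ∃ σ : Fin M → Fin N, ∀ m : Fin (M + 1), ∀ s ∈ Set.Icc (0 : ℝ) 1,
          pathPts q0 goal (fun i => X (i, σ i) ω) m.castSucc +
            s • (pathPts q0 goal (fun i => X (i, σ i) ω) m.succ -
              pathPts q0 goal (fun i => X (i, σ i) ω) m.castSucc) ∉ Ccoll} := by
  obtain ⟨hC0', hCtop⟩ := ENNReal.toReal_pos_iff.1 hC0
  set q := (volume (Metric.ball (0 : EuclideanSpace ℝ (Fin d)) 1)).toReal * r ^ d /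
    (volume C).toReal
  set B : Fin M → Set (EuclideanSpace ℝ (Fin d)) := fun i => Metric.ball (p i.castSucc.succ) r
  have hBC : ∀ i, B i ⊆ C := fun i x hx =>
    (hmargin x ⟨i.castSucc, 1, ⟨zero_le_one, le_rfl⟩, by simpa [B] using hx⟩).1
  have hhit : ∀ i j, P (X (i, j) ⁻¹' B i) = ENNReal.ofReal q := fun i j => by
    rw [pdf.IsUniform.measure_preimage hC0'.ne' hCtop.ne (hdist (i, j)) measurableSet_ball,
      inter_eq_right.2 (hBC i)]
    simpa [finrank_euclideanSpace_fin] using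
      volume_ball_div_eq_ofReal volume hC0'.ne' hCtop.ne _ hr
  have hmiss : ∀ i, P (⋂ j, X (i, j) ⁻¹' (B i)ᶜ) ≤ ENNReal.ofReal (Real.exp (-(q * N))) :=
    fun i => by
      simpa using (hindep.precomp (Prod.mk_right_injective i)).measure_iInter_preimage_compl_le_exp
        (fun j => hmeas (i, j)) measurableSet_ball (by positivity) (hhit i)
  refine (le_of_eq (by simp)).trans ((ofReal_one_sub_card_mul_le_measure_compl_iUnion
    (Real.exp_nonneg _) hmiss).trans (measure_mono fun ω hω => ?_))
  simp only [compl_iUnion, mem_iInter, mem_compl_iff, mem_preimage, not_forall, not_not] at hω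
  choose σ hσ using hω
  have hclose := dist_pathPts_lt (Y := fun i => X (i, σ i) ω) hp0 hpl hr hσ
  exact ⟨σ, fun m s hs => (hmargin _ ⟨m, s, hs,
    dist_add_smul_sub_lt (hclose m.castSucc) (hclose m.succ) hs⟩).2⟩

/-- probabilistic completeness of layered sampling: if there is a piecewise
linear feasible path with `M+1` equal segments and collision margin `r` (every point within
distance `r` of its image lies in the free space `C \ Ccoll`), then sampling `N` points
i.i.d. uniformly from `C` per middle layer yields, with probability at least
`1 - M·exp(-(α_d r^d / μ(C)) N)`, a collision-free piecewise linear graph path from `q0` to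
the goal. -/
theorem layered_sampling_probabilistic_completeness
    {d : ℕ} (hd : 0 < d) (C Ccoll : Set (EuclideanSpace ℝ (Fin d)))
    (hCm : MeasurableSet C) (hCb : Bornology.IsBounded C)
    (hC0 : 0 < (volume C).toReal)
    (M N : ℕ) (hM : 0 < M) (hN : 0 < N)
    (q0 goal : EuclideanSpace ℝ (Fin d))
    (p : Fin (M + 2) → EuclideanSpace ℝ (Fin d))
    (hp0 : p 0 = q0) (hpl : p (Fin.last (M + 1)) = goal)
    (r : ℝ) (hr : 0 < r)
    (hmargin : ∀ x : EuclideanSpace ℝ (Fin d),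
      (∃ m : Fin (M + 1), ∃ s ∈ Set.Icc (0 : ℝ) 1,
        dist x (p m.castSucc + s • (p m.succ - p m.castSucc)) < r) → x ∈ C \ Ccoll)
    {Ω : Type*} [MeasurableSpace Ω] (P : Measure Ω) [IsProbabilityMeasure P]
    (X : Fin M × Fin N → Ω → EuclideanSpace ℝ (Fin d))
    (hmeas : ∀ k, Measurable (X k))
    (hdist : ∀ k, Measure.map (X k) P = (volume C)⁻¹ • volume.restrict C)
    (hindep : iIndepFun X P) :
    ENNReal.ofReal
        (1 - (M : ℝ) * Real.exp
          (-(((volume (Metric.ball (0 : EuclideanSpace ℝ (Fin d)) 1)).toReal *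
            r ^ d / (volume C).toReal) * N))) ≤
      P {ω | ∃ σ : Fin M → Fin N, ∀ m : Fin (M + 1), ∀ s ∈ Set.Icc (0 : ℝ) 1,
          pathPts q0 goal (fun i => X (i, σ i) ω) m.castSucc +
            s • (pathPts q0 goal (fun i => X (i, σ i) ω) m.succ -
              pathPts q0 goal (fun i => X (i, σ i) ω) m.castSucc) ∉ Ccoll} :=
  layered_sampling_probabilistic_completeness_general C Ccoll hC0 M N q0 goal p hp0 hpl r hr hmargin
    P X hmeas hdist hindep
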